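/- Suppose |x̂(t)| and |v̂(t)| are nonnegative absolutely continuous functions satisfying the differential inequalities d|x̂|/dt ≤ |v̂| and d|v̂|/dt ≤ -φ(|x̂|)|v̂| for a continuous nonnegative function φ. Then the Lyapunov function V(t) = |v̂(t)| + ∫_α^{|x̂(t)|} φ(s) ds is non-increasing in t for any fixed α ≥ 0. -/
import Mathlib

open Finset

/-- If |x̂|, |v̂| are nonnegative differentiable functions with d|x̂|/dt ≤ |v̂| and
d|v̂|/dt ≤ -φ(|x̂|)|v̂| for a continuous nonnegative φ, then
V(t) = |v̂(t)| + ∫_α^{|x̂(t)|} φ(s)ds is non-increasing for any fixed α ≥ 0. -/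
theorem lyapunov_nonincreasing
    (X W : ℝ → ℝ) (X' W' : ℝ → ℝ) (φ : ℝ → ℝ) (α : ℝ) (hα : 0 ≤ α)
    (hXnn : ∀ t, 0 ≤ X t) (hWnn : ∀ t, 0 ≤ W t)
    (hφc : Continuous φ) (hφnn : ∀ s, 0 ≤ φ s)
    (hX : ∀ t, HasDerivAt X (X' t) t)
    (hW : ∀ t, HasDerivAt W (W' t) t)
    (hX' : ∀ t, X' t ≤ W t)
    (hW' : ∀ t, W' t ≤ -(φ (X t)) * W t) :
    ∀ s t : ℝ, s ≤ t →
      W t + ∫ u in α..(X t), φ u ≤ W s + ∫ u in α..(X s), φ u := by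
  intro s t hst
  set V : ℝ → ℝ := fun t => W t + ∫ u in α..(X t), φ u with hV
  have hVd : ∀ t, HasDerivAt V (W' t + φ (X t) * X' t) t := by
    intro t
    have h1 : HasDerivAt (fun u => ∫ x in α..u, φ x) (φ (X t)) (X t) :=
      intervalIntegral.integral_hasDerivAt_right (hφc.intervalIntegrable _ _)
        (hφc.stronglyMeasurableAtFilter _ _) hφc.continuousAt
    have h2 := h1.comp t (hX t)
    exact (hW t).add h2
  have hanti : Antitone V := by
    apply antitone_of_deriv_nonpos
    · exact fun t => (hVd t).differentiableAt
    · intro t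
      rw [(hVd t).deriv]
      have h3 := mul_le_mul_of_nonneg_left (hX' t) (hφnn (X t))
      nlinarith [hW' t]
  exact hanti hst
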